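/- Let σ > 0, γ ∈ [0,1], 0 < Δ_∞ ≤ Δ_2, ξ > 0, and let α ≥ 2 be an integer. Let m ∈ ℝ^T with ‖m‖_2 ≤ ξ and let g ∈ ℝ^d satisfy ‖g‖_2 ≤ Δ_2 and ‖g‖_∞ ≤ Δ_∞. Then the Rényi divergence of order α between the product measure ⊗_{j=1}^d ( γ·N(g_j·m, σ²·I_T) + (1−γ)·N(0, σ²·I_T) ) and ⊗_{j=1}^d N(0, σ²·I_T) is at most ( (Δ_2²/Δ_∞²) / (α−1) ) · log( Σ_{ℓ=0}^{α} C(α,ℓ) · (1−γ)^{α−ℓ} · γ^ℓ · exp( ℓ(ℓ−1)·ξ²·Δ_∞² / (2σ²) ) ). -/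

import Mathlib

open MeasureTheory ProbabilityTheory Real
open scoped ENNReal NNReal Classical

/-- Rényi divergence of order `a` between measures `μ` and `ν`:
`(a-1)⁻¹ * log ∫ (dμ/dν)^a dν`, set to `⊤` when `μ` is not absolutely
continuous with respect to `ν`. -/
noncomputable def renyiDiv {E : Type*} [MeasurableSpace E] (a : ℝ) (μ ν : Measure E) : EReal :=
  if μ ≪ ν then (((a - 1)⁻¹ : ℝ) : EReal) * ENNReal.log (∫⁻ x, (μ.rnDeriv ν x) ^ a ∂ν)
  else ⊤

/-- Bernoulli(γ) distribution on ℝ, supported on {0, 1}. -/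
noncomputable def bern (γ : ℝ) : Measure ℝ :=
  ENNReal.ofReal γ • Measure.dirac 1 + ENNReal.ofReal (1 - γ) • Measure.dirac 0

/-!
The mixture's density against `N(0, σ² I)^{⊗ d}` factorises over the `d` columns, so the
`α`-th moment of the likelihood ratio is a product of column moments. Expanding
`(γ L + 1 - γ)^α` binomially, the `ℓ`-th power of the Gaussian likelihood ratio `L` of mean
`g_j m` integrates to `exp (ℓ (ℓ - 1) g_j² ‖m‖² / 2σ²)`, so column `j` contributes
`M (g_j² ‖m‖²)` with `M s = ∑ₗ C(α,ℓ) (1-γ)^(α-ℓ) γ^ℓ exp (ℓ (ℓ - 1) s / 2σ²)`.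
By Jensen's inequality for `x ↦ x ^ θ`, `log M (θ s) ≤ θ log M s` for `θ ∈ [0, 1]`; with
`θ_j = g_j² / Δ_∞²` and `M` monotone, the column logarithms sum to at most
`(‖g‖² / Δ_∞²) log M (ξ² Δ_∞²)`.
-/

section Product

variable {ι : Type*} [Fintype ι] {E : ι → Type*} [∀ i, MeasurableSpace (E i)]
  (μ : ∀ i, Measure (E i)) [∀ i, IsProbabilityMeasure (μ i)]

theorem lintegral_pi_prod_eq_prod (f : ∀ i, E i → ℝ≥0∞) (hf : ∀ i, Measurable (f i)) :
    ∫⁻ x, ∏ i, f i (x i) ∂Measure.pi μ = ∏ i, ∫⁻ y, f i y ∂μ i := by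
  refine (lintegral_prod_eq_prod_lintegral_of_indepFun Finset.univ
    (fun i (x : ∀ i, E i) => f i (x i)) (iIndepFun_pi fun i => (hf i).aemeasurable)
    fun i => (hf i).comp (measurable_pi_apply i)).trans ?_
  exact Finset.prod_congr rfl fun i _ => (measurePreserving_eval μ i).lintegral_comp (hf i)

theorem pi_withDensity (f : ∀ i, E i → ℝ≥0∞) (hf : ∀ i, Measurable (f i))
    [∀ i, SigmaFinite ((μ i).withDensity (f i))] :
    Measure.pi (fun i => (μ i).withDensity (f i)) =
      (Measure.pi μ).withDensity fun x => ∏ i, f i (x i) := by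
  refine Measure.pi_eq fun s hs => ?_
  have hind : (Set.univ.pi s).indicator (fun x => ∏ i, f i (x i)) =
      fun x => ∏ i, (s i).indicator (f i) (x i) := by
    ext x
    simp only [Set.indicator, Set.mem_univ_pi, Finset.prod_ite_zero, Finset.mem_univ,
      forall_const]
  rw [withDensity_apply _ (.univ_pi hs), ← lintegral_indicator (.univ_pi hs), hind,
    lintegral_pi_prod_eq_prod μ _ fun i => (hf i).indicator (hs i)]
  exact Finset.prod_congr rfl fun i _ => by
    rw [lintegral_indicator (hs i), withDensity_apply _ (hs i)]

end Product

theorem renyiDiv_withDensity {E : Type*} [MeasurableSpace E] (a : ℝ) (ν : Measure E)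
    [SigmaFinite ν] {f : E → ℝ≥0∞} (hf : Measurable f) :
    renyiDiv a (ν.withDensity f) ν = ((a - 1)⁻¹ : ℝ) * ENNReal.log (∫⁻ x, f x ^ a ∂ν) := by
  rw [renyiDiv, if_pos (withDensity_absolutelyContinuous ν f),
    lintegral_congr_ae ((Measure.rnDeriv_withDensity ν hf).mono fun x hx => by rw [hx])]

theorem renyiDiv_pi_withDensity {ι : Type*} [Fintype ι] {E : ι → Type*}
    [∀ i, MeasurableSpace (E i)] {a : ℝ} (ha : 0 ≤ a) (ν : ∀ i, Measure (E i))
    [∀ i, IsProbabilityMeasure (ν i)] (f : ∀ i, E i → ℝ≥0∞) (hf : ∀ i, Measurable (f i))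
    [∀ i, SigmaFinite ((ν i).withDensity (f i))] :
    renyiDiv a (Measure.pi fun i => (ν i).withDensity (f i)) (Measure.pi ν) =
      ((a - 1)⁻¹ : ℝ) * ENNReal.log (∏ i, ∫⁻ x, f i x ^ a ∂ν i) := by
  rw [pi_withDensity ν f hf, renyiDiv_withDensity a _ (by fun_prop)]
  simp_rw [← ENNReal.prod_rpow_of_nonneg ha]
  rw [lintegral_pi_prod_eq_prod ν _ fun i => (hf i).pow_const a]

section Gaussian

variable {v : ℝ≥0}

theorem gaussianReal_eq_withDensity (hv : v ≠ 0) (c : ℝ) :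
    gaussianReal c v = (gaussianReal 0 v).withDensity
      fun x => ENNReal.ofReal (exp ((c * x - c ^ 2 / 2) / v)) := by
  have hv' : (v : ℝ) ≠ 0 := by exact_mod_cast hv
  rw [gaussianReal_of_var_ne_zero _ hv, gaussianReal_of_var_ne_zero _ hv,
    ← withDensity_mul _ (measurable_gaussianPDF 0 v) (by fun_prop)]
  congr 1
  ext x
  simp only [Pi.mul_apply, gaussianPDF, gaussianPDFReal]
  rw [← ENNReal.ofReal_mul (by positivity), mul_assoc _ (rexp _), ← exp_add]
  congr 3
  field_simp
  ring

theorem lintegral_exp_mul_gaussianReal (a : ℝ) :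
    ∫⁻ x, ENNReal.ofReal (exp (a * x)) ∂gaussianReal 0 v =
      ENNReal.ofReal (exp (v * a ^ 2 / 2)) := by
  rw [← ofReal_integral_eq_lintegral_ofReal (integrable_exp_mul_gaussianReal a)
    (ae_of_all _ fun x => (exp_pos _).le)]
  have hmgf := congrFun (mgf_id_gaussianReal (μ := 0) (v := v)) a
  simp only [mgf, id, zero_mul, zero_add] at hmgf
  rw [hmgf]

variable {ι : Type*} [Fintype ι]

theorem lintegral_exp_sum_mul_pi_gaussianReal (a : ι → ℝ) :
    ∫⁻ x, ENNReal.ofReal (exp (∑ i, a i * x i)) ∂(Measure.pi fun _ => gaussianReal 0 v) =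
      ENNReal.ofReal (exp (v * (∑ i, a i ^ 2) / 2)) := by
  simp_rw [exp_sum, ENNReal.ofReal_prod_of_nonneg fun _ _ => (exp_pos _).le]
  rw [lintegral_pi_prod_eq_prod _ (fun i y => ENNReal.ofReal (exp (a i * y))) (by fun_prop)]
  simp_rw [lintegral_exp_mul_gaussianReal, Finset.mul_sum, Finset.sum_div, exp_sum]
  rw [ENNReal.ofReal_prod_of_nonneg fun _ _ => (exp_pos _).le]

noncomputable def gaussianLikelihoodRatio (v : ℝ≥0) (μ x : ι → ℝ) : ℝ≥0∞ :=
  ENNReal.ofReal (exp (∑ i, (μ i * x i - μ i ^ 2 / 2) / v))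

@[fun_prop]
theorem measurable_gaussianLikelihoodRatio (μ : ι → ℝ) :
    Measurable (gaussianLikelihoodRatio v μ) := by
  unfold gaussianLikelihoodRatio
  fun_prop

theorem pi_gaussianReal_eq_withDensity (hv : v ≠ 0) (μ : ι → ℝ) :
    Measure.pi (fun i => gaussianReal (μ i) v) =
      (Measure.pi fun _ => gaussianReal 0 v).withDensity (gaussianLikelihoodRatio v μ) := by
  simp_rw [gaussianReal_eq_withDensity hv (μ _)]
  rw [pi_withDensity _ _ (by fun_prop)]
  congr 1
  ext x
  rw [gaussianLikelihoodRatio, exp_sum, ENNReal.ofReal_prod_of_nonneg fun _ _ => (exp_pos _).le]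

theorem lintegral_gaussianLikelihoodRatio_pow (hv : v ≠ 0) (μ : ι → ℝ) (n : ℕ) :
    ∫⁻ x, gaussianLikelihoodRatio v μ x ^ n ∂(Measure.pi fun _ => gaussianReal 0 v) =
      ENNReal.ofReal (exp (n * (n - 1) * (∑ i, μ i ^ 2) / (2 * v))) := by
  have hpow : ∀ x, gaussianLikelihoodRatio v μ x ^ n =
      ENNReal.ofReal (exp (-(n / (2 * v)) * ∑ i, μ i ^ 2)) *
        ENNReal.ofReal (exp (∑ i, (n * μ i / v) * x i)) := by
    intro x
    rw [gaussianLikelihoodRatio, ← ENNReal.ofReal_pow (exp_pos _).le,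
      ← ENNReal.ofReal_mul (exp_pos _).le, ← exp_nat_mul, ← exp_add, Finset.mul_sum,
      Finset.mul_sum, ← Finset.sum_add_distrib]
    congr 2
    refine Finset.sum_congr rfl fun i _ => ?_
    ring
  simp_rw [hpow]
  rw [lintegral_const_mul _ (by fun_prop), lintegral_exp_sum_mul_pi_gaussianReal,
    ← ENNReal.ofReal_mul (exp_pos _).le, ← exp_add]
  have hv' : (v : ℝ) ≠ 0 := by exact_mod_cast hv
  simp_rw [mul_div_assoc (n : ℝ), mul_pow, ← Finset.mul_sum, div_pow, ← Finset.sum_div]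
  congr 2
  field_simp
  ring

end Gaussian

theorem sum_range_choose_mul_one_sub_pow_mul_pow (γ : ℝ) (n : ℕ) :
    ∑ ℓ ∈ Finset.range (n + 1), (n.choose ℓ : ℝ) * (1 - γ) ^ (n - ℓ) * γ ^ ℓ = 1 := by
  have h := add_pow γ (1 - γ) n
  rw [add_sub_cancel, one_pow] at h
  exact (Finset.sum_congr rfl fun ℓ _ => by ring).trans h.symm

/-- The `n`-th moment of the density of `γ N(μ, v I) + (1 - γ) N(0, v I)` against `N(0, v I)`,
as a function of `s = ‖μ‖²`. -/
noncomputable def gaussianMixtureMoment (γ v : ℝ) (n : ℕ) (s : ℝ) : ℝ :=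
  ∑ ℓ ∈ Finset.range (n + 1),
    (n.choose ℓ : ℝ) * (1 - γ) ^ (n - ℓ) * γ ^ ℓ * exp (ℓ * (ℓ - 1) * s / (2 * v))

section MixtureMoment

variable {γ v : ℝ} {n : ℕ}

theorem choose_mul_one_sub_pow_mul_pow_nonneg (hγ0 : 0 ≤ γ) (hγ1 : γ ≤ 1) (ℓ : ℕ) :
    0 ≤ (n.choose ℓ : ℝ) * (1 - γ) ^ (n - ℓ) * γ ^ ℓ := by
  have : 0 ≤ 1 - γ := by linarith
  positivity

theorem gaussianMixtureMoment_zero : gaussianMixtureMoment γ v n 0 = 1 := by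
  simp only [gaussianMixtureMoment, mul_zero, zero_div, exp_zero, mul_one]
  exact sum_range_choose_mul_one_sub_pow_mul_pow γ n

theorem gaussianMixtureMoment_mono (hγ0 : 0 ≤ γ) (hγ1 : γ ≤ 1) (hv : 0 ≤ v) :
    Monotone (gaussianMixtureMoment γ v n) := by
  intro s t hst
  refine Finset.sum_le_sum fun ℓ _ => mul_le_mul_of_nonneg_left ?_
    (choose_mul_one_sub_pow_mul_pow_nonneg hγ0 hγ1 ℓ)
  have hℓ : 0 ≤ (ℓ : ℝ) * (ℓ - 1) := by
    rcases ℓ with _ | ℓ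
    · simp
    · push_cast
      nlinarith
  gcongr

theorem one_le_gaussianMixtureMoment (hγ0 : 0 ≤ γ) (hγ1 : γ ≤ 1) (hv : 0 ≤ v) {s : ℝ}
    (hs : 0 ≤ s) : 1 ≤ gaussianMixtureMoment γ v n s :=
  gaussianMixtureMoment_zero (γ := γ) (v := v) (n := n) ▸ gaussianMixtureMoment_mono hγ0 hγ1 hv hs

/-- Jensen's inequality for the concave map `x ↦ x ^ θ`. -/
theorem gaussianMixtureMoment_mul_le_rpow (hγ0 : 0 ≤ γ) (hγ1 : γ ≤ 1) {θ : ℝ} (hθ0 : 0 ≤ θ)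
    (hθ1 : θ ≤ 1) (s : ℝ) :
    gaussianMixtureMoment γ v n (θ * s) ≤ gaussianMixtureMoment γ v n s ^ θ := by
  have hexp : ∀ ℓ : ℕ, exp (ℓ * (ℓ - 1) * (θ * s) / (2 * v)) =
      exp (ℓ * (ℓ - 1) * s / (2 * v)) ^ θ := fun ℓ => by
    rw [← exp_mul]
    ring_nf
  simp only [gaussianMixtureMoment, hexp]
  exact (Real.concaveOn_rpow hθ0 hθ1).le_map_sum
    (fun ℓ _ => choose_mul_one_sub_pow_mul_pow_nonneg hγ0 hγ1 ℓ)
    (sum_range_choose_mul_one_sub_pow_mul_pow γ n) fun ℓ _ => (exp_pos _).le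

theorem log_gaussianMixtureMoment_mul_le (hγ0 : 0 ≤ γ) (hγ1 : γ ≤ 1) (hv : 0 ≤ v) {θ s : ℝ}
    (hθ0 : 0 ≤ θ) (hθ1 : θ ≤ 1) (hs : 0 ≤ s) :
    log (gaussianMixtureMoment γ v n (θ * s)) ≤ θ * log (gaussianMixtureMoment γ v n s) := by
  rw [← log_rpow (one_pos.trans_le (one_le_gaussianMixtureMoment hγ0 hγ1 hv hs))]
  exact log_le_log (one_pos.trans_le (one_le_gaussianMixtureMoment hγ0 hγ1 hv
    (mul_nonneg hθ0 hs))) (gaussianMixtureMoment_mul_le_rpow hγ0 hγ1 hθ0 hθ1 s)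

theorem sum_log_gaussianMixtureMoment_le {κ : Type*} [Fintype κ] (hγ0 : 0 ≤ γ) (hγ1 : γ ≤ 1)
    (hv : 0 ≤ v) {c ξ Δ₂ Δ : ℝ} (hΔ : 0 < Δ) (hc0 : 0 ≤ c)
    (hc : c ≤ ξ ^ 2) (g : κ → ℝ) (hg2 : ∑ j, g j ^ 2 ≤ Δ₂ ^ 2) (hginf : ∀ j, |g j| ≤ Δ) :
    ∑ j, log (gaussianMixtureMoment γ v n (g j ^ 2 * c)) ≤
      Δ₂ ^ 2 / Δ ^ 2 * log (gaussianMixtureMoment γ v n (ξ ^ 2 * Δ ^ 2)) := by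
  have hlog : 0 ≤ log (gaussianMixtureMoment γ v n (ξ ^ 2 * Δ ^ 2)) :=
    log_nonneg (one_le_gaussianMixtureMoment hγ0 hγ1 hv (by positivity))
  have hcoord : ∀ j, log (gaussianMixtureMoment γ v n (g j ^ 2 * c)) ≤
      g j ^ 2 / Δ ^ 2 * log (gaussianMixtureMoment γ v n (ξ ^ 2 * Δ ^ 2)) := fun j => by
    have hθ1 : g j ^ 2 / Δ ^ 2 ≤ 1 :=
      div_le_one_of_le₀ (sq_abs (g j) ▸ pow_le_pow_left₀ (abs_nonneg _) (hginf j) 2)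
        (by positivity)
    have hscale : g j ^ 2 / Δ ^ 2 * (ξ ^ 2 * Δ ^ 2) = g j ^ 2 * ξ ^ 2 := by
      field_simp
    calc log (gaussianMixtureMoment γ v n (g j ^ 2 * c))
        ≤ log (gaussianMixtureMoment γ v n (g j ^ 2 / Δ ^ 2 * (ξ ^ 2 * Δ ^ 2))) := by
          refine log_le_log (one_pos.trans_le (one_le_gaussianMixtureMoment hγ0 hγ1 hv
            (by positivity))) (gaussianMixtureMoment_mono hγ0 hγ1 hv ?_)
          rw [hscale]
          gcongr
      _ ≤ _ := log_gaussianMixtureMoment_mul_le hγ0 hγ1 hv (by positivity) hθ1 (by positivity)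
  calc ∑ j, log (gaussianMixtureMoment γ v n (g j ^ 2 * c))
      ≤ ∑ j, g j ^ 2 / Δ ^ 2 * log (gaussianMixtureMoment γ v n (ξ ^ 2 * Δ ^ 2)) :=
        Finset.sum_le_sum fun j _ => hcoord j
    _ = (∑ j, g j ^ 2) / Δ ^ 2 * log (gaussianMixtureMoment γ v n (ξ ^ 2 * Δ ^ 2)) := by
        rw [← Finset.sum_mul, Finset.sum_div]
    _ ≤ Δ₂ ^ 2 / Δ ^ 2 * log (gaussianMixtureMoment γ v n (ξ ^ 2 * Δ ^ 2)) := by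
        gcongr

end MixtureMoment

section GaussianMixture

variable {ι : Type*} [Fintype ι] {v : ℝ≥0} {γ : ℝ}

theorem mixture_pi_gaussianReal_eq_withDensity (hv : v ≠ 0) (μ : ι → ℝ) :
    ENNReal.ofReal γ • Measure.pi (fun i => gaussianReal (μ i) v) +
        ENNReal.ofReal (1 - γ) • Measure.pi (fun _ : ι => gaussianReal 0 v) =
      (Measure.pi fun _ => gaussianReal 0 v).withDensity
        fun x => ENNReal.ofReal γ * gaussianLikelihoodRatio v μ x + ENNReal.ofReal (1 - γ) := by
  rw [pi_gaussianReal_eq_withDensity hv, ← withDensity_smul _ (by fun_prop),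
    ← withDensity_const, ← withDensity_add_right _ measurable_const]
  rfl

theorem lintegral_gaussianMixture_pow (hv : v ≠ 0) (hγ0 : 0 ≤ γ) (hγ1 : γ ≤ 1) (μ : ι → ℝ)
    (n : ℕ) :
    ∫⁻ x, (ENNReal.ofReal γ * gaussianLikelihoodRatio v μ x + ENNReal.ofReal (1 - γ)) ^ n
        ∂(Measure.pi fun _ => gaussianReal 0 v) =
      ENNReal.ofReal (gaussianMixtureMoment γ v n (∑ i, μ i ^ 2)) := by
  have hterm : ∀ ℓ x, (ENNReal.ofReal γ * gaussianLikelihoodRatio v μ x) ^ ℓ *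
      ENNReal.ofReal (1 - γ) ^ (n - ℓ) * n.choose ℓ =
        n.choose ℓ * ENNReal.ofReal (1 - γ) ^ (n - ℓ) * ENNReal.ofReal γ ^ ℓ *
          gaussianLikelihoodRatio v μ x ^ ℓ := fun ℓ x => by ring
  simp_rw [add_pow, hterm]
  rw [lintegral_finsetSum _ fun ℓ _ => by fun_prop,
    gaussianMixtureMoment, ENNReal.ofReal_sum_of_nonneg fun ℓ _ =>
      mul_nonneg (choose_mul_one_sub_pow_mul_pow_nonneg hγ0 hγ1 ℓ) (exp_pos _).le]
  refine Finset.sum_congr rfl fun ℓ _ => ?_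
  rw [lintegral_const_mul _ (by fun_prop), lintegral_gaussianLikelihoodRatio_pow hv,
    ENNReal.ofReal_mul (choose_mul_one_sub_pow_mul_pow_nonneg hγ0 hγ1 ℓ),
    ENNReal.ofReal_mul (mul_nonneg (Nat.cast_nonneg _) (pow_nonneg (sub_nonneg.2 hγ1) _)),
    ENNReal.ofReal_mul (by positivity), ENNReal.ofReal_natCast,
    ENNReal.ofReal_pow (by linarith), ENNReal.ofReal_pow hγ0]

theorem renyiDiv_pi_gaussianMixture {κ : Type*} [Fintype κ] (hv : v ≠ 0) (hγ0 : 0 ≤ γ)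
    (hγ1 : γ ≤ 1) (μ : κ → ι → ℝ) (n : ℕ) :
    renyiDiv n
      (Measure.pi fun j => ENNReal.ofReal γ • Measure.pi (fun i => gaussianReal (μ j i) v) +
        ENNReal.ofReal (1 - γ) • Measure.pi (fun _ : ι => gaussianReal 0 v))
      (Measure.pi fun _ : κ => Measure.pi fun _ : ι => gaussianReal 0 v) =
    (((n - 1 : ℝ)⁻¹ * ∑ j, log (gaussianMixtureMoment γ v n (∑ i, μ j i ^ 2)) : ℝ) : EReal) := by
  have hfin : ∀ j, SigmaFinite ((Measure.pi fun _ : ι => gaussianReal 0 v).withDensity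
      fun x => ENNReal.ofReal γ * gaussianLikelihoodRatio v (μ j) x + ENNReal.ofReal (1 - γ)) :=
    fun j => SigmaFinite.withDensity_of_ne_top' fun x => by
      simp [gaussianLikelihoodRatio, ENNReal.mul_eq_top]
  have hpos : ∀ j, 0 < gaussianMixtureMoment γ v n (∑ i, μ j i ^ 2) := fun j =>
    one_pos.trans_le (one_le_gaussianMixtureMoment hγ0 hγ1 v.coe_nonneg (by positivity))
  simp_rw [mixture_pi_gaussianReal_eq_withDensity hv]
  rw [renyiDiv_pi_withDensity (Nat.cast_nonneg n) _ _ fun j => by fun_prop]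
  simp_rw [ENNReal.rpow_natCast, lintegral_gaussianMixture_pow hv hγ0 hγ1]
  rw [← ENNReal.ofReal_prod_of_nonneg fun j _ => (hpos j).le,
    ENNReal.log_ofReal_of_pos (Finset.prod_pos fun j _ => hpos j),
    log_prod fun j _ => (hpos j).ne', EReal.coe_mul]

end GaussianMixture

theorem renyi_div_sgmf_transcript_le_general
    (σ γ Δ₂ Δinf ξ : ℝ) (hσ : 0 < σ) (hγ0 : 0 ≤ γ) (hγ1 : γ ≤ 1)
    (hΔinf : 0 < Δinf)
    (α : ℕ) (hα : 2 ≤ α)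
    (T d : ℕ) (m : Fin T → ℝ) (hm : Real.sqrt (∑ t, m t ^ 2) ≤ ξ)
    (g : Fin d → ℝ)
    (hg2 : Real.sqrt (∑ j, g j ^ 2) ≤ Δ₂)
    (hginf : ∀ j, |g j| ≤ Δinf) :
    renyiDiv (α : ℝ)
      (Measure.pi fun j =>
        ENNReal.ofReal γ • (Measure.pi fun t => gaussianReal (g j * m t) (Real.toNNReal (σ ^ 2))) +
          ENNReal.ofReal (1 - γ) •
            (Measure.pi fun _ : Fin T => gaussianReal 0 (Real.toNNReal (σ ^ 2))))
      (Measure.pi fun _ : Fin d =>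
        Measure.pi fun _ : Fin T => gaussianReal 0 (Real.toNNReal (σ ^ 2))) ≤
    (((Δ₂ ^ 2 / Δinf ^ 2) / ((α : ℝ) - 1) * Real.log (∑ ℓ ∈ Finset.range (α + 1),
        (α.choose ℓ : ℝ) * (1 - γ) ^ (α - ℓ) * γ ^ ℓ *
          Real.exp ((ℓ : ℝ) * ((ℓ : ℝ) - 1) * ξ ^ 2 * Δinf ^ 2 / (2 * σ ^ 2))) : ℝ) : EReal) := by
  have hv : (σ ^ 2).toNNReal ≠ 0 := by simp [hσ.ne']
  have hα1 : 0 ≤ ((α : ℝ) - 1)⁻¹ := inv_nonneg.2 (sub_nonneg.2 (Nat.one_le_cast.2 (by omega)))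
  rw [renyiDiv_pi_gaussianMixture hv hγ0 hγ1, EReal.coe_le_coe_iff,
    Real.coe_toNNReal _ (sq_nonneg σ)]
  simp_rw [mul_pow, ← Finset.mul_sum]
  calc ((α : ℝ) - 1)⁻¹ * ∑ j, log (gaussianMixtureMoment γ (σ ^ 2) α (g j ^ 2 * ∑ t, m t ^ 2))
      ≤ ((α : ℝ) - 1)⁻¹ *
          (Δ₂ ^ 2 / Δinf ^ 2 * log (gaussianMixtureMoment γ (σ ^ 2) α (ξ ^ 2 * Δinf ^ 2))) :=
        mul_le_mul_of_nonneg_left (sum_log_gaussianMixtureMoment_le hγ0 hγ1 (sq_nonneg σ) hΔinf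
          (by positivity) (sqrt_le_iff.1 hm).2 g (sqrt_le_iff.1 hg2).2 hginf) hα1
    _ = _ := by
        simp only [gaussianMixtureMoment, ← mul_assoc]
        ring

theorem renyi_div_sgmf_transcript_le
    (σ γ Δ₂ Δinf ξ : ℝ) (hσ : 0 < σ) (hγ0 : 0 ≤ γ) (hγ1 : γ ≤ 1)
    (hΔinf : 0 < Δinf) (hΔ : Δinf ≤ Δ₂) (hξ : 0 < ξ)
    (α : ℕ) (hα : 2 ≤ α)
    (T d : ℕ) (m : Fin T → ℝ) (hm : Real.sqrt (∑ t, m t ^ 2) ≤ ξ)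
    (g : Fin d → ℝ)
    (hg2 : Real.sqrt (∑ j, g j ^ 2) ≤ Δ₂)
    (hginf : ∀ j, |g j| ≤ Δinf) :
    renyiDiv (α : ℝ)
      (Measure.pi fun j =>
        ENNReal.ofReal γ • (Measure.pi fun t => gaussianReal (g j * m t) (Real.toNNReal (σ ^ 2))) +
          ENNReal.ofReal (1 - γ) •
            (Measure.pi fun _ : Fin T => gaussianReal 0 (Real.toNNReal (σ ^ 2))))
      (Measure.pi fun _ : Fin d =>
        Measure.pi fun _ : Fin T => gaussianReal 0 (Real.toNNReal (σ ^ 2))) ≤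
    (((Δ₂ ^ 2 / Δinf ^ 2) / ((α : ℝ) - 1) * Real.log (∑ ℓ ∈ Finset.range (α + 1),
        (α.choose ℓ : ℝ) * (1 - γ) ^ (α - ℓ) * γ ^ ℓ *
          Real.exp ((ℓ : ℝ) * ((ℓ : ℝ) - 1) * ξ ^ 2 * Δinf ^ 2 / (2 * σ ^ 2))) : ℝ) : EReal) :=
  renyi_div_sgmf_transcript_le_general σ γ Δ₂ Δinf ξ hσ hγ0 hγ1 hΔinf α hα T d m hm g hg2 hginf
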